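/- For every integer n ≥ 1, the set S = {k ∈ {1,…,n} : k odd} of all odd vertices, which has cardinality ⌈n/2⌉, resolves the digraph G(*n) with respect to signed distance. -/

import Mathlib

/-- `StepsTo R m u v` : there is a directed walk of length `m` from `u` to `v`. -/
def StepsTo {V : Type*} (R : V → V → Prop) : ℕ → V → V → Prop
  | 0 => fun u v => u = v
  | (m + 1) => fun u v => ∃ w, R u w ∧ StepsTo R m w v

/-- Directed distance: length of a shortest directed path (`⊤` = ∞ if none exists). -/
noncomputable def ddist {V : Type*} (R : V → V → Prop) (u v : V) : ℕ∞ :=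
  sInf ((fun m : ℕ => (m : ℕ∞)) '' {m : ℕ | StepsTo R m u v})

/-- Signed distance `d±(u,v)`: `d(u,v)` if a `u→v` path exists and `d(u,v) ≤ d(v,u)`;
`-d(v,u)` if a `v→u` path exists and `d(v,u) < d(u,v)`; `⊤` if neither path exists. -/
noncomputable def sdist {V : Type*} (R : V → V → Prop) (u v : V) : WithTop ℤ :=
  if ddist R u v ≤ ddist R v u then (ddist R u v).map (fun m : ℕ => (m : ℤ))
  else (ddist R v u).map (fun m : ℕ => (-(m : ℤ)))

/-- `S` resolves the digraph with arc relation `R` (w.r.t. signed distance). -/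
def Resolves {V : Type*} (R : V → V → Prop) (S : Set V) : Prop :=
  ∀ u v : V, (∀ s ∈ S, sdist R s u = sdist R s v) → u = v

/-- Metric dimension of the digraph with arc relation `R` (w.r.t. signed distance). -/
noncomputable def metricDim {V : Type*} (R : V → V → Prop) : ℕ :=
  sInf {k : ℕ | ∃ S : Finset V, S.card = k ∧ Resolves R ↑S}

/-- The digraph `G(*n)` of single-heap nim: vertices `{0,…,n}`, arc `i → j` iff `j < i`. -/
def nimR (n : ℕ) : Fin (n + 1) → Fin (n + 1) → Prop := fun i j => (j : ℕ) < (i : ℕ)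

lemma stepsTo_le {n m : ℕ} {u v : Fin (n + 1)} (h : StepsTo (nimR n) m u v) :
    (v : ℕ) ≤ u := by
  induction m generalizing u with
  | zero => cases h; exact le_refl _
  | succ m ih =>
    obtain ⟨w, hw, hs⟩ := h
    exact le_trans (ih hs) (le_of_lt hw)

lemma ddist_self {V : Type*} (R : V → V → Prop) (u : V) : ddist R u u = 0 := by
  apply le_antisymm
  · exact sInf_le ⟨0, rfl, rfl⟩
  · exact zero_le

lemma ddist_one {n : ℕ} {u v : Fin (n + 1)} (h : (v : ℕ) < u) :
    ddist (nimR n) u v = 1 := by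
  apply le_antisymm
  · exact sInf_le ⟨1, ⟨v, h, rfl⟩, rfl⟩
  · refine le_sInf ?_
    rintro b ⟨m, hm, rfl⟩
    cases m with
    | zero => cases hm; omega
    | succ m =>
      show (1 : ℕ∞) ≤ ((m + 1 : ℕ) : ℕ∞)
      exact_mod_cast Nat.le_add_left 1 m

lemma ddist_top {n : ℕ} {u v : Fin (n + 1)} (h : (u : ℕ) < v) :
    ddist (nimR n) u v = ⊤ := by
  have he : {m : ℕ | StepsTo (nimR n) m u v} = ∅ := by
    ext m
    simp only [Set.mem_setOf_eq, Set.mem_empty_iff_false, iff_false]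
    intro hs
    exact absurd (stepsTo_le hs) (by omega)
  rw [ddist, he]
  simp

lemma sdist_self {V : Type*} (R : V → V → Prop) (u : V) : sdist R u u = 0 := by
  rw [sdist, if_pos le_rfl, ddist_self]
  rfl

lemma sdist_lt {n : ℕ} {u v : Fin (n + 1)} (h : (v : ℕ) < u) :
    sdist (nimR n) u v = 1 := by
  rw [sdist, if_pos (by rw [ddist_one h, ddist_top h]; exact le_top), ddist_one h]
  rfl

lemma sdist_gt {n : ℕ} {u v : Fin (n + 1)} (h : (u : ℕ) < v) :
    sdist (nimR n) u v = -1 := by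
  rw [sdist, if_neg (by rw [ddist_one h, ddist_top h]; simp), ddist_one h]
  rfl

lemma key {n : ℕ} {u v : Fin (n + 1)} (huv : (u : ℕ) < v)
    (h : ∀ s : Fin (n + 1), Odd (s : ℕ) → sdist (nimR n) s u = sdist (nimR n) s v) :
    False := by
  by_cases hu : Odd (u : ℕ)
  · have h0 := h u hu
    rw [sdist_self, sdist_gt huv] at h0
    exact absurd h0 (by decide)
  · have hvlt : (v : ℕ) < n + 1 := v.isLt
    set s : Fin (n + 1) := ⟨(u : ℕ) + 1, by omega⟩ with hs
    have hsodd : Odd (s : ℕ) := by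
      have : Even (u : ℕ) := Nat.not_odd_iff_even.mp hu
      exact this.add_one
    have h1 := h s hsodd
    have hsu : sdist (nimR n) s u = 1 := sdist_lt (by simp [hs])
    rcases eq_or_lt_of_le (show (s : ℕ) ≤ v by simp [hs]; omega) with he | hl
    · rw [hsu, show v = s from Fin.ext he.symm, sdist_self] at h1
      exact absurd h1 (by decide)
    · rw [hsu, sdist_gt hl] at h1
      exact absurd h1 (by decide)

lemma card_odd_range (N : ℕ) :
    ((Finset.range N).filter (fun k => Odd k)).card = N / 2 := by
  induction N with
  | zero => simp
  | succ N ih =>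
    rw [Finset.range_add_one, Finset.filter_insert]
    by_cases hN : Odd N
    · rw [if_pos hN, Finset.card_insert_of_notMem (by simp), ih]
      have := Nat.odd_iff.mp hN
      omega
    · rw [if_neg hN, ih]
      have := Nat.not_odd_iff.mp hN
      omega

/-- for every `n ≥ 1`, the set of odd vertices of `G(*n)` has cardinality
`⌈n/2⌉` and resolves `G(*n)` with respect to signed distance. -/
theorem stmt2 (n : ℕ) (hn : 1 ≤ n) :
    ({k : Fin (n + 1) | Odd (k : ℕ)}).ncard = (n + 1) / 2 ∧
    Resolves (nimR n) {k : Fin (n + 1) | Odd (k : ℕ)} := by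
  constructor
  · have hset : {k : Fin (n + 1) | Odd (k : ℕ)} =
        ↑(Finset.univ.filter (fun k : Fin (n + 1) => Odd (k : ℕ))) := by
      ext k; simp
    rw [hset, Set.ncard_coe_finset]
    rw [← card_odd_range (n + 1)]
    refine Finset.card_bij (fun k _ => (k : ℕ)) ?_ ?_ ?_
    · intro k hk
      simp only [Finset.mem_filter, Finset.mem_univ, true_and] at hk
      simp [Finset.mem_filter, Finset.mem_range, k.isLt, hk]
    · intro a ha b hb hab
      exact Fin.ext hab
    · intro b hb
      simp only [Finset.mem_filter, Finset.mem_range] at hb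
      exact ⟨⟨b, hb.1⟩, by simp [hb.2], rfl⟩
  · intro u v h
    by_contra hne
    have h' : ∀ s : Fin (n + 1), Odd (s : ℕ) →
        sdist (nimR n) s u = sdist (nimR n) s v := fun s hs => h s hs
    rcases lt_trichotomy ((u : ℕ)) ((v : ℕ)) with hlt | heq | hgt
    · exact key hlt h'
    · exact hne (Fin.ext heq)
    · exact key hgt (fun s hs => (h' s hs).symm)
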